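/- Let n ≥ 3 and 0 ≤ a ≤ a + b ≤ n. The minimum of P(S ∈ (a, a+b)) over all S that are sums of n standard uniform random variables equals max{2b/n − 1, 0}. -/

import Mathlib

open MeasureTheory ProbabilityTheory Set

/-- The uniform distribution on `[a, b]`. -/
noncomputable def unif (a b : ℝ) : Measure ℝ :=
  (ENNReal.ofReal (b - a))⁻¹ • (volume.restrict (Set.Icc a b))

/-- `F` is smaller than `G` in convex order. -/
def ConvexOrder (F G : Measure ℝ) : Prop :=
  ∀ φ : ℝ → ℝ, ConvexOn ℝ Set.univ φ → Integrable φ F → Integrable φ G →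
    ∫ x, φ x ∂F ≤ ∫ x, φ x ∂G

/-- The set of possible distributions of `X 1 + ... + X n` with `X i ~ Fs i`. -/
def Dset (n : ℕ) (Fs : Fin n → Measure ℝ) : Set (Measure ℝ) :=
  {G | ∃ (Ω : Type) (_ : MeasureSpace Ω),
    IsProbabilityMeasure (ℙ : Measure Ω) ∧
    ∃ X : Fin n → Ω → ℝ, (∀ i, Measurable (X i)) ∧
      (∀ i, Measure.map (X i) ℙ = Fs i) ∧
      Measure.map (fun ω => ∑ i, X i ω) ℙ = G}

/-- The quantile (left-continuous inverse cdf) of a distribution. -/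
noncomputable def quantile (F : Measure ℝ) (t : ℝ) : ℝ :=
  sInf {x : ℝ | t ≤ (F (Set.Iic x)).toReal}

/-- `F` is the distribution of `X + Y` for some `X ~ μ`, `Y ~ ν`. -/
def IsSumDist (μ ν F : Measure ℝ) : Prop :=
  ∃ (Ω : Type) (_ : MeasureSpace Ω), IsProbabilityMeasure (ℙ : Measure Ω) ∧
    ∃ X Y : Ω → ℝ, Measurable X ∧ Measurable Y ∧
      Measure.map X ℙ = μ ∧ Measure.map Y ℙ = ν ∧
      Measure.map (fun ω => X ω + Y ω) ℙ = F

/-!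
Lower bound: for `0 ≤ t ≤ 1` the function `(t - x)⁺` has mean `t² / 2` under `U[0, 1]`, and on
`{S ≤ a}` the sum `∑ (t - Uᵢ)⁺` is at least `n t - a`. Markov's inequality with `t = 2a/n` gives
`P(S ≤ a) ≤ 2a/n`; applied to the `1 - Uᵢ` it gives `P(S ≥ a + b) ≤ 2(n - a - b)/n`.

Attainment: `n ≥ 2` uniforms admit a joint mix, a coupling with constant sum `n/2`, built from pairs
`(v, 1 - v)` and, for odd `n`, one triple `(v, v + 1/2 mod 1, 1 - 2v mod 1)`. Cut `[0, 1)` at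
`t₁ = 2a/n` and `t₂ = 2(a + b)/n - 1` (clipped to `[0, 1]`) and put a rescaled joint mix on each
piece. Then the sum is `n` times the midpoint of the current piece: `≤ a` on the first, inside
`(a, a + b)` on the second and `≥ a + b` on the third, so `P(S ∈ (a, a + b)) = t₂ - t₁`.
-/

lemma unif_zero_one : unif 0 1 = volume.restrict (Ico 0 1) := by
  simp [unif, Measure.restrict_congr_set Ico_ae_eq_Icc]

theorem MeasureTheory.MeasurePreserving.piecewise {α β : Type*} [MeasurableSpace α]
    [MeasurableSpace β] {μ : Measure α} {ν₁ ν₂ : Measure β} {s : Set α} [DecidablePred (· ∈ s)]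
    {f g : α → β} (hs : MeasurableSet s) (hf : MeasurePreserving f (μ.restrict s) ν₁)
    (hg : MeasurePreserving g (μ.restrict sᶜ) ν₂) :
    MeasurePreserving (s.piecewise f g) μ (ν₁ + ν₂) := by
  have hm : Measurable (s.piecewise f g) := hf.measurable.piecewise hs hg.measurable
  refine ⟨hm, ?_⟩
  rw [← Measure.restrict_add_restrict_compl (μ := μ) hs, Measure.map_add _ _ hm,
    Measure.map_congr (piecewise_ae_eq_restrict hs),
    Measure.map_congr (piecewise_ae_eq_restrict_compl hs), hf.map_eq, hg.map_eq]

lemma restrict_Ico_add_restrict_Ico {a b c : ℝ} (hab : a ≤ b) (hbc : b ≤ c) :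
    volume.restrict (Ico a b) + volume.restrict (Ico b c) = volume.restrict (Ico a c) := by
  rw [← Measure.restrict_union Ico_disjoint_Ico_same measurableSet_Ico,
    Ico_union_Ico_eq_Ico hab hbc]

lemma measurePreserving_ite_lt {f g : ℝ → ℝ} {ν₁ ν₂ : Measure ℝ} {a b c : ℝ} (hab : a ≤ b)
    (hbc : b ≤ c) (hf : MeasurePreserving f (volume.restrict (Ico a b)) ν₁)
    (hg : MeasurePreserving g (volume.restrict (Ico b c)) ν₂) :
    MeasurePreserving (fun x => if x < b then f x else g x) (volume.restrict (Ico a c))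
      (ν₁ + ν₂) := by
  have hlt : Ico a c ∩ Iio b = Ico a b := by rw [Ico_inter_Iio, min_eq_right hbc]
  have hge : Ico a c ∩ (Iio b)ᶜ = Ico b c := by
    rw [compl_Iio, Ico_inter_Ici, max_eq_right hab]
  refine MeasurePreserving.piecewise (s := Iio b) measurableSet_Iio ?_ ?_
  · rwa [Measure.restrict_restrict measurableSet_Iio, inter_comm, hlt]
  · rwa [Measure.restrict_restrict measurableSet_Iio.compl, inter_comm, hge]

lemma measurePreserving_mul_add_Ico {m : ℝ} (hm : 0 < m) (c a b : ℝ) :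
    MeasurePreserving (fun x => m * x + c) (volume.restrict (Ico a b))
      (ENNReal.ofReal m⁻¹ • volume.restrict (Ico (m * a + c) (m * b + c))) := by
  have hmap : MeasurePreserving (fun x : ℝ => m * x + c) volume
      (ENNReal.ofReal m⁻¹ • volume) := by
    refine ⟨by fun_prop, ?_⟩
    rw [show (fun x : ℝ => m * x + c) = (· + c) ∘ (m * ·) from rfl,
      ← Measure.map_map (by fun_prop) (by fun_prop), Real.map_volume_mul_left hm.ne',
      Measure.map_smul, map_add_right_eq_self, abs_of_pos (inv_pos.2 hm)]
  have hpre : (fun x => m * x + c) ⁻¹' Ico (m * a + c) (m * b + c) = Ico a b := by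
    ext x
    simp [mul_le_mul_iff_right₀ hm, mul_lt_mul_iff_right₀ hm]
  have h := hmap.restrict_preimage (measurableSet_Ico (a := m * a + c) (b := m * b + c))
  rwa [hpre, Measure.restrict_smul] at h

lemma measurePreserving_add_Ico (c a b : ℝ) :
    MeasurePreserving (· + c) (volume.restrict (Ico a b))
      (volume.restrict (Ico (a + c) (b + c))) := by
  simpa using measurePreserving_mul_add_Ico one_pos c a b

lemma measurePreserving_one_sub :
    MeasurePreserving (fun x => 1 - x) (volume.restrict (Ico (0 : ℝ) 1))
      (volume.restrict (Ico 0 1)) := by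
  have h := (volume.measurePreserving_sub_left (1 : ℝ)).restrict_preimage
    (measurableSet_Ico (a := 0) (b := 1))
  rwa [preimage_const_sub_Ico, sub_zero, sub_self,
    Measure.restrict_congr_set Ico_ae_eq_Ioc.symm] at h

lemma integral_max_sub_zero_unif {t : ℝ} (ht0 : 0 ≤ t) (ht1 : t ≤ 1) :
    ∫ x, max (t - x) 0 ∂unif 0 1 = t ^ 2 / 2 := by
  have hcont : Continuous fun x : ℝ => max (t - x) 0 := by fun_prop
  have hleft : ∫ x in 0..t, max (t - x) 0 = ∫ x in 0..t, (t - x) :=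
    intervalIntegral.integral_congr fun x hx => max_eq_left (by
      rw [uIcc_of_le ht0] at hx; linarith [hx.2])
  have hright : ∫ x in t..1, max (t - x) 0 = ∫ _ in t..1, (0 : ℝ) :=
    intervalIntegral.integral_congr fun x hx => max_eq_right (by
      rw [uIcc_of_le ht1] at hx; linarith [hx.1])
  rw [unif_zero_one, Measure.restrict_congr_set Ico_ae_eq_Ioc,
    ← intervalIntegral.integral_of_le zero_le_one,
    ← intervalIntegral.integral_add_adjacent_intervals (b := t) (hcont.intervalIntegrable _ _)
      (hcont.intervalIntegrable _ _), hleft, hright,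
    intervalIntegral.integral_sub intervalIntegrable_const intervalIntegral.intervalIntegrable_id]
  simp
  ring

section LowerBound

variable {Ω : Type*} [MeasurableSpace Ω] {μ : Measure Ω} [IsProbabilityMeasure μ] {n : ℕ}
  {X : Fin n → Ω → ℝ}

lemma measureReal_sum_le_le_of_pos (hX : ∀ i, MeasurePreserving (X i) μ (unif 0 1)) {a : ℝ}
    (ha : 0 < a) (han : 2 * a ≤ n) :
    μ.real {ω | ∑ i, X i ω ≤ a} ≤ 2 * a / n := by
  have hn : (0 : ℝ) < n := by linarith
  set t := 2 * a / n with ht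
  have ht0 : 0 ≤ t := by positivity
  have ht1 : t ≤ 1 := div_le_one_of_le₀ han hn.le
  have hcont : Continuous fun x : ℝ => max (t - x) 0 := by fun_prop
  have hg : Integrable (fun x => max (t - x) 0) (unif 0 1) := by
    rw [unif_zero_one]
    exact hcont.integrableOn_Icc.mono_set Ico_subset_Icc_self
  have hint : ∀ i, Integrable (fun ω => max (t - X i ω) 0) μ := fun i =>
    (hX i).integrable_comp_of_integrable hg
  have hmean : ∀ i, ∫ ω, max (t - X i ω) 0 ∂μ = t ^ 2 / 2 := fun i => by
    rw [← integral_max_sub_zero_unif ht0 ht1, ← (hX i).map_eq, integral_map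
      (hX i).measurable.aemeasurable hcont.aestronglyMeasurable]
  -- Markov's inequality for ∑ (t - X i)⁺, which is at least n t - ∑ X i = 2a - ∑ X i.
  have hsub : {ω | ∑ i, X i ω ≤ a} ⊆ {ω | a ≤ ∑ i, max (t - X i ω) 0} :=
    fun ω (hω : ∑ i, X i ω ≤ a) => by
      have hpos : ∑ i, (t - X i ω) ≤ ∑ i, max (t - X i ω) 0 :=
        Finset.sum_le_sum fun i _ => le_max_left _ _
      rw [Finset.sum_sub_distrib, Finset.sum_const, Finset.card_univ, Fintype.card_fin,
        nsmul_eq_mul, ht, mul_div_cancel₀ _ hn.ne'] at hpos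
      show a ≤ _
      linarith
  have hmarkov := mul_meas_ge_le_integral_of_nonneg (f := fun ω => ∑ i, max (t - X i ω) 0)
    (.of_forall fun ω => Finset.sum_nonneg fun i _ => le_max_right _ _)
    (integrable_finsetSum _ fun i _ => hint i) a
  rw [integral_finsetSum _ fun i _ => hint i] at hmarkov
  simp only [hmean, Finset.sum_const, Finset.card_univ, Fintype.card_fin, nsmul_eq_mul] at hmarkov
  have hnt : (n : ℝ) * (t ^ 2 / 2) = a * t := by rw [ht]; field_simp
  refine le_of_mul_le_mul_left ?_ ha
  calc a * μ.real {ω | ∑ i, X i ω ≤ a}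
      ≤ a * μ.real {ω | a ≤ ∑ i, max (t - X i ω) 0} :=
        mul_le_mul_of_nonneg_left (measureReal_mono hsub) ha.le
    _ ≤ a * t := hnt ▸ hmarkov

lemma measureReal_sum_le_le (hX : ∀ i, MeasurePreserving (X i) μ (unif 0 1)) (hn : 0 < n)
    {a : ℝ} (ha : 0 ≤ a) :
    μ.real {ω | ∑ i, X i ω ≤ a} ≤ 2 * a / n := by
  have hn' : (0 : ℝ) < n := Nat.cast_pos.2 hn
  -- approximate `a` from above, which also covers `a = 0`
  refine le_of_forall_gt_imp_ge_of_dense fun c hc => ?_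
  rcases le_or_gt 1 c with hc1 | hc1
  · exact measureReal_le_one.trans hc1
  have ha' : a < c * n / 2 := by rw [div_lt_iff₀ hn'] at hc; linarith
  calc μ.real {ω | ∑ i, X i ω ≤ a} ≤ μ.real {ω | ∑ i, X i ω ≤ c * n / 2} :=
        measureReal_mono fun ω hω => le_trans hω ha'.le
    _ ≤ 2 * (c * n / 2) / n :=
        measureReal_sum_le_le_of_pos hX (ha.trans_lt ha') (by nlinarith)
    _ = c := by field_simp

lemma measureReal_le_sum_le (hX : ∀ i, MeasurePreserving (X i) μ (unif 0 1)) (hn : 0 < n)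
    {c : ℝ} (hc : c ≤ n) :
    μ.real {ω | c ≤ ∑ i, X i ω} ≤ 2 * (n - c) / n := by
  have hX' : ∀ i, MeasurePreserving (fun ω => 1 - X i ω) μ (unif 0 1) := fun i => by
    rw [unif_zero_one] at hX ⊢
    exact measurePreserving_one_sub.comp (hX i)
  convert measureReal_sum_le_le hX' hn (sub_nonneg.2 hc) using 3
  ext ω
  simp only [Finset.sum_sub_distrib, Finset.sum_const, Finset.card_univ,
    Fintype.card_fin, nsmul_eq_mul, mul_one]
  constructor <;> intro h <;> linarith

lemma le_measureReal_sum_mem_Ioo (hX : ∀ i, MeasurePreserving (X i) μ (unif 0 1)) (hn : 0 < n)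
    {a b : ℝ} (ha : 0 ≤ a) (hab : a + b ≤ n) :
    2 * b / n - 1 ≤ μ.real {ω | ∑ i, X i ω ∈ Ioo a (a + b)} := by
  have hcover : univ ⊆ {ω | ∑ i, X i ω ∈ Ioo a (a + b)} ∪
      ({ω | ∑ i, X i ω ≤ a} ∪ {ω | a + b ≤ ∑ i, X i ω}) := fun ω _ => by
    by_cases h₁ : ∑ i, X i ω ≤ a
    · exact .inr (.inl h₁)
    by_cases h₂ : a + b ≤ ∑ i, X i ω
    · exact .inr (.inr h₂)
    exact .inl ⟨not_le.1 h₁, not_le.1 h₂⟩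
  have hunion := (measureReal_mono (μ := μ) hcover).trans
    ((measureReal_union_le _ _).trans (add_le_add_right (measureReal_union_le _ _) _))
  rw [probReal_univ] at hunion
  have hlow := measureReal_sum_le_le hX hn ha
  have hhigh := measureReal_le_sum_le hX hn hab
  have hn' : (0 : ℝ) < n := Nat.cast_pos.2 hn
  have : 2 * b / n - 1 = 1 - 2 * a / n - 2 * (n - (a + b)) / n := by field_simp; ring
  linarith

end LowerBound

-- Read as random variables on `(ℝ, μ)`, the `Y i` all have law `μ`, and their sum is constant.
def IsJointMix {n : ℕ} (μ : Measure ℝ) (c : ℝ) (Y : Fin n → ℝ → ℝ) : Prop :=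
  (∀ i, MeasurePreserving (Y i) μ μ) ∧ ∀ x, ∑ i, Y i x = c

lemma IsJointMix.append {m n : ℕ} {μ : Measure ℝ} {c d : ℝ} {Y : Fin m → ℝ → ℝ}
    {Z : Fin n → ℝ → ℝ} (hY : IsJointMix μ c Y) (hZ : IsJointMix μ d Z) :
    IsJointMix μ (c + d) (Fin.append Y Z) := by
  refine ⟨fun i => ?_, fun x => ?_⟩
  · induction i using Fin.addCases with
    | left i => simpa using hY.1 i
    | right j => simpa using hZ.1 j
  · simp [Fin.sum_univ_add, hY.2, hZ.2]

lemma isJointMix_two : IsJointMix (volume.restrict (Ico 0 1)) 1 ![id, fun x => 1 - x] := by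
  refine ⟨fun i => ?_, fun x => by simp⟩
  fin_cases i
  · exact .id _
  · exact measurePreserving_one_sub

lemma measurePreserving_add_half_mod_one :
    MeasurePreserving (fun x => if x < 1 / 2 then x + 1 / 2 else x - 1 / 2)
      (volume.restrict (Ico (0 : ℝ) 1)) (volume.restrict (Ico 0 1)) := by
  have h := measurePreserving_ite_lt (a := 0) (b := 1 / 2) (c := 1) (by norm_num) (by norm_num)
    (measurePreserving_add_Ico (1 / 2) 0 (1 / 2))
    (measurePreserving_add_Ico (-(1 / 2)) (1 / 2) 1)
  norm_num [← sub_eq_add_neg] at h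
  rwa [add_comm, restrict_Ico_add_restrict_Ico (by norm_num) (by norm_num)] at h

lemma measurePreserving_two_mul_mod_one :
    MeasurePreserving (fun x => if x < 1 / 2 then 2 * x else 2 * x - 1)
      (volume.restrict (Ico (0 : ℝ) 1)) (volume.restrict (Ico 0 1)) := by
  have h := measurePreserving_ite_lt (a := 0) (b := 1 / 2) (c := 1) (by norm_num) (by norm_num)
    (measurePreserving_mul_add_Ico two_pos 0 0 (1 / 2))
    (measurePreserving_mul_add_Ico two_pos (-1) (1 / 2) 1)
  norm_num [← sub_eq_add_neg] at h
  rwa [← add_smul, ← ENNReal.ofReal_add (by norm_num) (by norm_num), add_halves,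
    ENNReal.ofReal_one, one_smul] at h

lemma isJointMix_three : IsJointMix (volume.restrict (Ico 0 1)) (3 / 2)
    ![id, fun x => if x < 1 / 2 then x + 1 / 2 else x - 1 / 2,
      fun x => 1 - if x < 1 / 2 then 2 * x else 2 * x - 1] := by
  refine ⟨fun i => ?_, fun x => ?_⟩
  · fin_cases i
    · exact .id _
    · exact measurePreserving_add_half_mod_one
    · exact measurePreserving_one_sub.comp measurePreserving_two_mul_mod_one
  · simp only [Fin.sum_univ_three, Matrix.cons_val_zero, Matrix.cons_val_one, Matrix.cons_val_two,
      Matrix.head_cons, Matrix.tail_cons, id]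
    split_ifs <;> ring

lemma exists_isJointMix : ∀ n : ℕ, 2 ≤ n →
    ∃ Y : Fin n → ℝ → ℝ, IsJointMix (volume.restrict (Ico 0 1)) (n / 2) Y
  | 2, _ => ⟨_, by simpa using isJointMix_two⟩
  | 3, _ => ⟨_, isJointMix_three⟩
  | n + 4, _ => by
    obtain ⟨Y, hY⟩ := exists_isJointMix (n + 2) (by omega)
    have h := hY.append isJointMix_two
    rw [show ((n + 2 : ℕ) : ℝ) / 2 + 1 = (n + 4 : ℕ) / 2 by push_cast; ring] at h
    exact ⟨_, h⟩

noncomputable def affineConj (p q : ℝ) (f : ℝ → ℝ) (x : ℝ) : ℝ :=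
  (q - p) * f ((x - p) / (q - p)) + p

lemma isJointMix_affineConj {n : ℕ} {c : ℝ} {Y : Fin n → ℝ → ℝ}
    (hY : IsJointMix (volume.restrict (Ico 0 1)) c Y) {p q : ℝ} (hpq : p ≤ q) :
    IsJointMix (volume.restrict (Ico p q)) (n * p + (q - p) * c)
      (fun i => affineConj p q (Y i)) := by
  refine ⟨fun i => ?_, fun x => ?_⟩
  · unfold affineConj
    rcases hpq.eq_or_lt with rfl | hpq
    · have := (hY.1 i).measurable
      exact ⟨by fun_prop, by simp⟩
    have hm : 0 < q - p := sub_pos.2 hpq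
    have hB : MeasurePreserving (fun x => (x - p) / (q - p)) (volume.restrict (Ico p q))
        (ENNReal.ofReal (q - p) • volume.restrict (Ico 0 1)) := by
      have h := measurePreserving_mul_add_Ico (inv_pos.2 hm) (-p / (q - p)) p q
      rwa [inv_inv, show (q - p)⁻¹ * p + -p / (q - p) = 0 by ring,
        show (q - p)⁻¹ * q + -p / (q - p) = 1 by field_simp; ring,
        show (fun x => (q - p)⁻¹ * x + -p / (q - p)) = fun x => (x - p) / (q - p) by
          ext x; ring] at h
    have hA : MeasurePreserving (fun y => (q - p) * y + p)
        (ENNReal.ofReal (q - p) • volume.restrict (Ico 0 1)) (volume.restrict (Ico p q)) := by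
      have h := (measurePreserving_mul_add_Ico hm p 0 1).smul_measure (ENNReal.ofReal (q - p))
      rwa [smul_smul, ← ENNReal.ofReal_mul hm.le, mul_inv_cancel₀ hm.ne', ENNReal.ofReal_one,
        one_smul, mul_zero, zero_add, mul_one, sub_add_cancel] at h
    exact hA.comp (((hY.1 i).smul_measure _).comp hB)
  · simp only [affineConj, Finset.sum_add_distrib, ← Finset.mul_sum, hY.2]
    simp [add_comm]

lemma exists_measurePreserving_sum_eq {n : ℕ} (hn : 2 ≤ n) {t₁ t₂ : ℝ} (h0 : 0 ≤ t₁)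
    (h12 : t₁ ≤ t₂) (h21 : t₂ ≤ 1) :
    ∃ X : Fin n → ℝ → ℝ,
      (∀ i, MeasurePreserving (X i) (volume.restrict (Ico 0 1)) (volume.restrict (Ico 0 1))) ∧
      ∀ x, ∑ i, X i x = if x < t₁ then n * t₁ / 2
        else if x < t₂ then n * (t₁ + t₂) / 2 else n * (t₂ + 1) / 2 := by
  obtain ⟨Y, hY⟩ := exists_isJointMix n hn
  have h₁ := isJointMix_affineConj hY h0
  have h₂ := isJointMix_affineConj hY h12
  have h₃ := isJointMix_affineConj hY h21
  refine ⟨fun i x => if x < t₁ then affineConj 0 t₁ (Y i) x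
    else if x < t₂ then affineConj t₁ t₂ (Y i) x else affineConj t₂ 1 (Y i) x,
    fun i => ?_, fun x => ?_⟩
  · have h := measurePreserving_ite_lt h0 (h12.trans h21) (h₁.1 i)
      (measurePreserving_ite_lt h12 h21 (h₂.1 i) (h₃.1 i))
    rwa [restrict_Ico_add_restrict_Ico h12 h21,
      restrict_Ico_add_restrict_Ico h0 (h12.trans h21)] at h
  · simp only [Finset.sum_ite_irrel, h₁.2, h₂.2, h₃.2]
    split_ifs <;> ring

lemma exists_measureReal_sum_mem_eq {n : ℕ} (hn : 2 ≤ n) {s : Set ℝ} {t₁ t₂ : ℝ}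
    (h0 : 0 ≤ t₁) (h12 : t₁ ≤ t₂) (h21 : t₂ ≤ 1) (h₁ : n * t₁ / 2 ∉ s)
    (h₂ : t₁ < t₂ → n * (t₁ + t₂) / 2 ∈ s) (h₃ : n * (t₂ + 1) / 2 ∉ s) :
    ∃ X : Fin n → ℝ → ℝ,
      (∀ i, MeasurePreserving (X i) (volume.restrict (Ico 0 1)) (unif 0 1)) ∧
      (volume.restrict (Ico 0 1)).real {x | ∑ i, X i x ∈ s} = t₂ - t₁ := by
  obtain ⟨X, hX, hsum⟩ := exists_measurePreserving_sum_eq hn h0 h12 h21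
  refine ⟨X, fun i => unif_zero_one ▸ hX i, ?_⟩
  have hset : {x | ∑ i, X i x ∈ s} ∩ Ico 0 1 = Ico t₁ t₂ := by
    ext x
    simp only [mem_inter_iff, mem_ofPred_eq, mem_Ico, hsum]
    split_ifs with hx₁ hx₂
    · exact iff_of_false (fun h => h₁ h.1) (fun h => hx₁.not_ge h.1)
    · have hx₁ := not_lt.1 hx₁
      exact iff_of_true ⟨h₂ (hx₁.trans_lt hx₂), h0.trans hx₁, hx₂.trans_le h21⟩ ⟨hx₁, hx₂⟩
    · exact iff_of_false (fun h => h₃ h.1) (fun h => hx₂ h.2)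
  rw [measureReal_restrict_apply' measurableSet_Ico, hset, Real.volume_real_Ico_of_le h12]

lemma exists_measureReal_sum_mem_Ioo_eq {n : ℕ} (hn : 2 ≤ n) {a b : ℝ} (ha : 0 ≤ a)
    (hab : a + b ≤ n) :
    ∃ X : Fin n → ℝ → ℝ,
      (∀ i, MeasurePreserving (X i) (volume.restrict (Ico 0 1)) (unif 0 1)) ∧
      (volume.restrict (Ico 0 1)).real {x | ∑ i, X i x ∈ Ioo a (a + b)} =
        max (2 * b / n - 1) 0 := by
  have hn' : (0 : ℝ) < n := by norm_cast; omega
  set u := 2 * a / n with hu_def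
  set v := 2 * (a + b) / n - 1 with hv_def
  have hu : 0 ≤ u := by positivity
  have hv : v ≤ 1 := by rw [sub_le_iff_le_add, div_le_iff₀ hn']; linarith
  have ha' : a = n * u / 2 := by rw [hu_def]; field_simp
  have hab' : a + b = n * (v + 1) / 2 := by rw [hv_def]; field_simp; ring
  have hmid : min u 1 < max (min u 1) v →
      n * (min u 1 + max (min u 1) v) / 2 ∈ Ioo a (a + b) := fun h => by
    have hv' : min u 1 < v := (lt_max_iff.1 h).resolve_left (lt_irrefl _)
    have hu1 : u < 1 := by
      by_contra! hu1
      rw [min_eq_right hu1] at hv'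
      linarith
    rw [min_eq_left hu1.le] at hv' ⊢
    rw [max_eq_right hv'.le, hab', ha']
    exact ⟨by gcongr; linarith, by rw [add_comm u]; gcongr⟩
  obtain ⟨X, hX, hP⟩ := exists_measureReal_sum_mem_eq hn (s := Ioo a (a + b))
    (le_min hu zero_le_one) (le_max_left _ v) (max_le (min_le_right _ _) hv)
    (fun h => h.1.not_ge (by rw [ha']; gcongr; exact min_le_left _ _)) hmid
    (fun h => h.2.not_ge (by rw [hab']; gcongr; exact le_max_right _ _))
  refine ⟨X, hX, hP.trans ?_⟩
  rw [show 2 * b / n - 1 = v - u by rw [hu_def, hv_def]; field_simp; ring]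
  rcases le_total u 1 with hu1 | hu1
  · rw [min_eq_left hu1, ← max_sub_sub_right, sub_self, max_comm]
  · rw [min_eq_right hu1, max_eq_left hv, sub_self, max_eq_right (by linarith)]

theorem stmt18_general (n : ℕ) (hn : 3 ≤ n) (a b : ℝ) (ha : 0 ≤ a)
    (hab : a + b ≤ (n : ℝ)) :
    IsLeast {r : ℝ | ∃ (Ω : Type) (_ : MeasureSpace Ω),
        IsProbabilityMeasure (ℙ : Measure Ω) ∧
        ∃ X : Fin n → Ω → ℝ, (∀ i, Measurable (X i)) ∧
          (∀ i, Measure.map (X i) ℙ = unif 0 1) ∧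
          r = (ℙ {ω | ∑ i, X i ω ∈ Set.Ioo a (a + b)}).toReal}
      (max (2 * b / n - 1) 0) := by
  refine ⟨?_, ?_⟩
  · obtain ⟨X, hX, hP⟩ := exists_measureReal_sum_mem_Ioo_eq (by omega) ha hab
    exact ⟨ℝ, ⟨volume.restrict (Ico 0 1)⟩, ⟨by simp⟩, X, fun i => (hX i).measurable,
      fun i => (hX i).map_eq, hP.symm⟩
  · rintro r ⟨Ω, _, _, X, hXm, hXd, rfl⟩
    exact max_le (le_measureReal_sum_mem_Ioo (fun i => ⟨hXm i, hXd i⟩) (by omega) ha hab)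
      measureReal_nonneg

theorem stmt18 (n : ℕ) (hn : 3 ≤ n) (a b : ℝ) (ha : 0 ≤ a) (hb : 0 ≤ b)
    (hab : a + b ≤ (n : ℝ)) :
    IsLeast {r : ℝ | ∃ (Ω : Type) (_ : MeasureSpace Ω),
        IsProbabilityMeasure (ℙ : Measure Ω) ∧
        ∃ X : Fin n → Ω → ℝ, (∀ i, Measurable (X i)) ∧
          (∀ i, Measure.map (X i) ℙ = unif 0 1) ∧
          r = (ℙ {ω | ∑ i, X i ω ∈ Set.Ioo a (a + b)}).toReal}
      (max (2 * b / n - 1) 0) :=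
  stmt18_general n hn a b ha hab
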